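/- arXiv:1612.09108 — 3 statements merged into one kernel-verified Lean document; each statement's English description precedes it below -/
import Mathlib

section
/- Let μ be a K-valued measure on 𝓡. For every A ∈ 𝓡 one has ‖A‖_μ = sup_{x ∈ A} N_μ(x) (with the convention that the supremum over the empty set is 0). -/
/-- A covering and separating ring of subsets of `X`. -/
structure IsSepSetRing {X : Type*} (R : Set (Set X)) : Prop where
  empty_mem : (∅ : Set X) ∈ R
  union_mem : ∀ ⦃A B : Set X⦄, A ∈ R → B ∈ R → A ∪ B ∈ R
  diff_mem : ∀ ⦃A B : Set X⦄, A ∈ R → B ∈ R → A \ B ∈ R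
  covering : ∀ x : X, ∃ A ∈ R, x ∈ A
  separating : ∀ a b : X, a ≠ b → ∃ A ∈ R, a ∈ A ∧ b ∉ A

/-- A `K`-valued measure on a ring of sets `R`. -/
structure IsNAMeasure {X : Type*} {K : Type*} [NontriviallyNormedField K]
    (R : Set (Set X)) (μ : Set X → K) : Prop where
  additive : ∀ ⦃A B : Set X⦄, A ∈ R → B ∈ R → Disjoint A B → μ (A ∪ B) = μ A + μ B
  bounded : ∀ A ∈ R, BddAbove {r : ℝ | ∃ B ∈ R, B ⊆ A ∧ r = ‖μ B‖}
  continuity : ∀ R₀ ⊆ R, R₀.Nonempty → (∀ A ∈ R₀, ∀ B ∈ R₀, A ∩ B ∈ R₀) →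
    ⋂₀ R₀ = ∅ → ∀ ε : ℝ, 0 < ε → ∃ A ∈ R₀, ‖μ A‖ < ε

/-- `‖A‖_μ`, the supremum of `‖μ B‖` over measurable `B ⊆ A`. -/
noncomputable def mSetNorm {X : Type*} {K : Type*} [NontriviallyNormedField K]
    (R : Set (Set X)) (μ : Set X → K) (A : Set X) : ℝ :=
  sSup {r : ℝ | ∃ B ∈ R, B ⊆ A ∧ r = ‖μ B‖}

/-- The norm function `N_μ(x)`, the infimum of `‖A‖_μ` over measurable `A ∋ x`. -/
noncomputable def mNormFn {X : Type*} {K : Type*} [NontriviallyNormedField K]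
    (R : Set (Set X)) (μ : Set X → K) (x : X) : ℝ :=
  sInf {r : ℝ | ∃ A ∈ R, x ∈ A ∧ r = mSetNorm R μ A}

/-- The extended (completed) ring `R_μ` of `μ`-approximable sets. -/
def extRing {X : Type*} {K : Type*} [NontriviallyNormedField K]
    (R : Set (Set X)) (μ : Set X → K) : Set (Set X) :=
  {A : Set X | ∀ ε : ℝ, 0 < ε → ∃ B ∈ R, ∀ x ∈ (A ∪ B) \ (A ∩ B), mNormFn R μ x ≤ ε}

/-!
Given `x ∈ A` and any `C ∋ x` in the ring, `N_μ(x) ≤ ‖C‖_μ`, which gives `sup_A N_μ ≤ ‖A‖_μ`.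
Conversely fix `B ⊆ A` in the ring, let `T = sup_B N_μ` and `ε > 0`. The sets `C` with
`‖C‖_μ < T + ε` cover `B`, so the sets `B \ (C₁ ∪ ⋯ ∪ Cₙ)` form a downward directed family with
empty intersection, and continuity of `μ` gives one of them with `‖μ‖ < ε`. The remaining piece
`B ∩ (C₁ ∪ ⋯ ∪ Cₙ)` splits into disjoint pieces, each inside some `Cᵢ`, and the strong triangle
inequality bounds its measure by `T + ε`; hence `‖μ B‖ ≤ T + ε`.
-/

namespace IsSepSetRing

variable {X : Type*} {R : Set (Set X)}

lemma inter_mem (hR : IsSepSetRing R) {A B : Set X} (hA : A ∈ R) (hB : B ∈ R) :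
    A ∩ B ∈ R := by
  rw [← Set.sdiff_sdiff_right_self]
  exact hR.diff_mem hA (hR.diff_mem hA hB)

lemma biUnion_mem (hR : IsSepSetRing R) {ι : Type*} (t : Finset ι) {C : ι → Set X}
    (hC : ∀ i, C i ∈ R) : ⋃ i ∈ t, C i ∈ R := by
  classical
  induction t using Finset.induction_on with
  | empty => simpa using hR.empty_mem
  | insert a s _ ih =>
    rw [Finset.set_biUnion_insert]
    exact hR.union_mem (hC a) ih

variable {K : Type*} [NontriviallyNormedField K]

lemma exists_mem_mSetNorm_lt (hR : IsSepSetRing R) {μ : Set X → K} {x : X} {r : ℝ}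
    (hx : mNormFn R μ x < r) :
    ∃ C ∈ R, x ∈ C ∧ mSetNorm R μ C < r := by
  obtain ⟨A, hA, hxA⟩ := hR.covering x
  obtain ⟨_, ⟨C, hC, hxC, rfl⟩, hCr⟩ :=
    exists_lt_of_csInf_lt (s := {r | ∃ A ∈ R, x ∈ A ∧ r = mSetNorm R μ A}) ⟨_, A, hA, hxA, rfl⟩ hx
  exact ⟨C, hC, hxC, hCr⟩

end IsSepSetRing

namespace IsNAMeasure

variable {X K : Type*} [NontriviallyNormedField K] {R : Set (Set X)} {μ : Set X → K}

lemma map_empty (hR : IsSepSetRing R) (hμ : IsNAMeasure R μ) : μ ∅ = 0 := by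
  have h := hμ.additive hR.empty_mem hR.empty_mem (Set.disjoint_empty ∅)
  rw [Set.union_empty] at h
  simpa using h

lemma norm_le_max_diff_inter (hna : ∀ x y : K, ‖x + y‖ ≤ max ‖x‖ ‖y‖)
    (hR : IsSepSetRing R) (hμ : IsNAMeasure R μ) {D E : Set X} (hD : D ∈ R) (hE : E ∈ R) :
    ‖μ D‖ ≤ max ‖μ (D \ E)‖ ‖μ (D ∩ E)‖ := by
  have hsplit : μ D = μ (D \ E) + μ (D ∩ E) := by
    conv_lhs => rw [← Set.sdiff_union_inter D E]
    exact hμ.additive (hR.diff_mem hD hE) (hR.inter_mem hD hE) Set.disjoint_sdiff_inter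
  rw [hsplit]
  exact hna _ _

lemma norm_le_mSetNorm (hμ : IsNAMeasure R μ) {A B : Set X} (hA : A ∈ R) (hB : B ∈ R)
    (hBA : B ⊆ A) : ‖μ B‖ ≤ mSetNorm R μ A :=
  le_csSup (hμ.bounded A hA) ⟨B, hB, hBA, rfl⟩

lemma mSetNorm_nonneg (hR : IsSepSetRing R) (hμ : IsNAMeasure R μ) {A : Set X} (hA : A ∈ R) :
    0 ≤ mSetNorm R μ A := by
  simpa [hμ.map_empty hR] using hμ.norm_le_mSetNorm hA hR.empty_mem (Set.empty_subset A)

lemma mNormFn_nonneg (hR : IsSepSetRing R) (hμ : IsNAMeasure R μ) (x : X) :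
    0 ≤ mNormFn R μ x :=
  Real.sInf_nonneg <| by rintro _ ⟨C, hC, -, rfl⟩; exact hμ.mSetNorm_nonneg hR hC

lemma mNormFn_le_mSetNorm (hR : IsSepSetRing R) (hμ : IsNAMeasure R μ) {A : Set X} {x : X}
    (hA : A ∈ R) (hx : x ∈ A) : mNormFn R μ x ≤ mSetNorm R μ A :=
  csInf_le ⟨0, fun _ ⟨_, hC, _, hr⟩ => hr ▸ hμ.mSetNorm_nonneg hR hC⟩ ⟨A, hA, hx, rfl⟩

/-- Thanks to the strong triangle inequality the bound does not grow with the number of sets. -/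
lemma norm_le_of_subset_biUnion (hna : ∀ x y : K, ‖x + y‖ ≤ max ‖x‖ ‖y‖)
    (hR : IsSepSetRing R) (hμ : IsNAMeasure R μ) {ι : Type*} (t : Finset ι) {C : ι → Set X}
    (hC : ∀ i, C i ∈ R) {c : ℝ} (hc0 : 0 ≤ c) (hc : ∀ i, mSetNorm R μ (C i) ≤ c)
    {D : Set X} (hD : D ∈ R) (hDt : D ⊆ ⋃ i ∈ t, C i) : ‖μ D‖ ≤ c := by
  classical
  induction t using Finset.induction_on generalizing D with
  | empty =>
    simp only [Finset.notMem_empty, Set.iUnion_of_empty, Set.iUnion_empty,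
      Set.subset_empty_iff] at hDt
    simpa [hDt, hμ.map_empty hR] using hc0
  | insert a s _ ih =>
    rw [Finset.set_biUnion_insert] at hDt
    have hrest : D \ C a ⊆ ⋃ i ∈ s, C i := fun x hx => (hDt hx.1).resolve_left hx.2
    refine (hμ.norm_le_max_diff_inter hna hR hD (hC a)).trans (max_le ?_ ?_)
    · exact ih (hR.diff_mem hD (hC a)) hrest
    · exact (hμ.norm_le_mSetNorm (hC a) (hR.inter_mem hD (hC a))
        Set.inter_subset_right).trans (hc a)

lemma exists_finset_norm_diff_biUnion_lt (hR : IsSepSetRing R) (hμ : IsNAMeasure R μ)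
    {ι : Type*} {C : ι → Set X} (hC : ∀ i, C i ∈ R) {B : Set X} (hB : B ∈ R)
    (hBC : B ⊆ ⋃ i, C i) {ε : ℝ} (hε : 0 < ε) :
    ∃ t : Finset ι, ‖μ (B \ ⋃ i ∈ t, C i)‖ < ε := by
  classical
  set R₀ : Set (Set X) := Set.range fun t : Finset ι => B \ ⋃ i ∈ t, C i
  have hR₀R : R₀ ⊆ R := by
    rintro _ ⟨t, rfl⟩
    exact hR.diff_mem hB (hR.biUnion_mem t hC)
  have hR₀inter : ∀ D ∈ R₀, ∀ E ∈ R₀, D ∩ E ∈ R₀ := by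
    rintro _ ⟨t, rfl⟩ _ ⟨s, rfl⟩
    refine ⟨t ∪ s, ?_⟩
    simp only [Set.sdiff_inter_sdiff, Finset.set_biUnion_union]
  have hR₀empty : ⋂₀ R₀ = ∅ := by
    refine Set.eq_empty_of_forall_notMem fun y hy => ?_
    have hyB : y ∈ B := by simpa using hy _ ⟨∅, rfl⟩
    obtain ⟨i, hyi⟩ := Set.mem_iUnion.1 (hBC hyB)
    exact (hy _ ⟨{i}, rfl⟩).2 (by simpa using hyi)
  obtain ⟨_, ⟨t, rfl⟩, ht⟩ :=
    hμ.continuity R₀ hR₀R (Set.range_nonempty _) hR₀inter hR₀empty ε hε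
  exact ⟨t, ht⟩

lemma norm_le_of_forall_mNormFn_le (hna : ∀ x y : K, ‖x + y‖ ≤ max ‖x‖ ‖y‖)
    (hR : IsSepSetRing R) (hμ : IsNAMeasure R μ) {B : Set X} (hB : B ∈ R) {T : ℝ}
    (hT0 : 0 ≤ T) (hT : ∀ x ∈ B, mNormFn R μ x ≤ T) : ‖μ B‖ ≤ T := by
  refine le_of_forall_pos_le_add fun ε hε => ?_
  let ι := {C : Set X // C ∈ R ∧ mSetNorm R μ C < T + ε}
  have hcover : B ⊆ ⋃ i : ι, i.1 := fun x hx => by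
    obtain ⟨C, hC, hxC, hCT⟩ := hR.exists_mem_mSetNorm_lt ((hT x hx).trans_lt
      (lt_add_of_pos_right T hε))
    exact Set.mem_iUnion.2 ⟨⟨C, hC, hCT⟩, hxC⟩
  have hCR : ∀ i : ι, i.1 ∈ R := fun i => i.2.1
  obtain ⟨t, ht⟩ := hμ.exists_finset_norm_diff_biUnion_lt hR hCR hB hcover hε
  have hU := hR.biUnion_mem t hCR
  have hinter : ‖μ (B ∩ ⋃ i ∈ t, i.1)‖ ≤ T + ε :=
    hμ.norm_le_of_subset_biUnion hna hR t hCR (by linarith) (fun i => i.2.2.le)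
      (hR.inter_mem hB hU) Set.inter_subset_right
  calc ‖μ B‖ ≤ max ‖μ (B \ ⋃ i ∈ t, i.1)‖ ‖μ (B ∩ ⋃ i ∈ t, i.1)‖ :=
        hμ.norm_le_max_diff_inter hna hR hB hU
    _ ≤ T + ε := max_le (by linarith) hinter

end IsNAMeasure

theorem stmt2_general {X K : Type*} [NontriviallyNormedField K]
    (hna : ∀ x y : K, ‖x + y‖ ≤ max ‖x‖ ‖y‖)
    (R : Set (Set X)) (hR : IsSepSetRing R)
    (μ : Set X → K) (hμ : IsNAMeasure R μ)
    (A : Set X) (hA : A ∈ R) :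
    mSetNorm R μ A = sSup (mNormFn R μ '' A) := by
  have hbdd : BddAbove (mNormFn R μ '' A) := by
    refine ⟨mSetNorm R μ A, ?_⟩
    rintro _ ⟨x, hx, rfl⟩
    exact hμ.mNormFn_le_mSetNorm hR hA hx
  have hT0 : 0 ≤ sSup (mNormFn R μ '' A) :=
    Real.sSup_nonneg <| by rintro _ ⟨x, -, rfl⟩; exact hμ.mNormFn_nonneg hR x
  apply le_antisymm
  · refine Real.sSup_le ?_ hT0
    rintro _ ⟨B, hB, hBA, rfl⟩
    exact hμ.norm_le_of_forall_mNormFn_le hna hR hB hT0 fun x hx =>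
      le_csSup hbdd ⟨x, hBA hx, rfl⟩
  · refine Real.sSup_le ?_ (hμ.mSetNorm_nonneg hR hA)
    rintro _ ⟨x, hx, rfl⟩
    exact hμ.mNormFn_le_mSetNorm hR hA hx

theorem stmt2 {X K : Type*} [NontriviallyNormedField K] [CompleteSpace K]
    (hna : ∀ x y : K, ‖x + y‖ ≤ max ‖x‖ ‖y‖)
    (R : Set (Set X)) (hR : IsSepSetRing R)
    (μ : Set X → K) (hμ : IsNAMeasure R μ)
    (A : Set X) (hA : A ∈ R) :
    mSetNorm R μ A = sSup (mNormFn R μ '' A) :=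
  stmt2_general hna R hR μ hμ A hA
end

section
/- Let μ be a K-valued measure on 𝓡. Then the function N_μ : X → ℝ is upper semicontinuous with respect to the 𝓡_μ-topology on X. -/
/-!
Every set of `R` is open for the `R_μ`-topology, and `N_μ` is bounded by `‖A‖_μ` on each
`A ∈ R`. So if `N_μ(x) < c`, some `A ∈ R` containing `x` has `‖A‖_μ < c`, and `A` is a
neighbourhood of `x` on which `N_μ < c`.
-/

section

variable {X K : Type*} [NontriviallyNormedField K] (R : Set (Set X)) (μ : Set X → K)

theorem mSetNorm_nonneg (A : Set X) : 0 ≤ mSetNorm R μ A :=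
  Real.sSup_nonneg <| by
    rintro r ⟨B, -, -, rfl⟩
    exact norm_nonneg _

theorem subset_extRing : R ⊆ extRing R μ := fun A hA _ _ =>
  ⟨A, hA, fun x hx => by simp at hx⟩

variable {R μ}

theorem mNormFn_le_mSetNorm {A : Set X} {x : X} (hA : A ∈ R) (hx : x ∈ A) :
    mNormFn R μ x ≤ mSetNorm R μ A :=
  csInf_le ⟨0, by rintro r ⟨B, -, -, rfl⟩; exact mSetNorm_nonneg R μ B⟩ ⟨A, hA, hx, rfl⟩

theorem exists_mSetNorm_lt_of_mNormFn_lt {x : X} {c : ℝ} (hx : ∃ A ∈ R, x ∈ A)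
    (hc : mNormFn R μ x < c) : ∃ A ∈ R, x ∈ A ∧ mSetNorm R μ A < c := by
  obtain ⟨A, hA, hxA⟩ := hx
  obtain ⟨_, ⟨B, hB, hxB, rfl⟩, hBc⟩ :=
    exists_lt_of_csInf_lt (s := {r | ∃ A ∈ R, x ∈ A ∧ r = mSetNorm R μ A})
      ⟨mSetNorm R μ A, A, hA, hxA, rfl⟩ hc
  exact ⟨B, hB, hxB, hBc⟩

end

theorem stmt7_general {X K : Type*} [NontriviallyNormedField K]
    (R : Set (Set X)) (hR : IsSepSetRing R)
    (μ : Set X → K) :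
    @UpperSemicontinuous X ℝ (TopologicalSpace.generateFrom (extRing R μ)) _
      (mNormFn R μ) := by
  let _ : TopologicalSpace X := TopologicalSpace.generateFrom (extRing R μ)
  intro x c hc
  obtain ⟨A, hA, hxA, hAc⟩ := exists_mSetNorm_lt_of_mNormFn_lt (hR.covering x) hc
  have hA_open : IsOpen A :=
    TopologicalSpace.isOpen_generateFrom_of_mem (subset_extRing R μ hA)
  filter_upwards [hA_open.mem_nhds hxA] with y hy
  exact (mNormFn_le_mSetNorm hA hy).trans_lt hAc

theorem stmt7 {X K : Type*} [NontriviallyNormedField K] [CompleteSpace K]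
    (hna : ∀ x y : K, ‖x + y‖ ≤ max ‖x‖ ‖y‖)
    (R : Set (Set X)) (hR : IsSepSetRing R)
    (μ : Set X → K) (hμ : IsNAMeasure R μ) :
    @UpperSemicontinuous X ℝ (TopologicalSpace.generateFrom (extRing R μ)) _
      (mNormFn R μ) :=
  stmt7_general R hR μ
end

section
/- Volkenborn-type limit over units (p-adic integral of xⁿ over ℤ_p^×): let p be a prime and n ∈ ℕ. Then in ℚ_p the sequence N ↦ (1/pᴺ) · Σ_{0 ≤ m < pᴺ, p ∤ m} mⁿ converges as N → ∞ to (1 − p^{n−1}) · Bₙ, where Bₙ is the n-th Bernoulli number (convention B₁ = −1/2) cast into ℚ_p and p^{n−1} is interpreted as the integer power (p : ℚ_p)^{(n : ℤ) − 1} (so that for n = 0 the factor is 1 − 1/p). -/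
/-!
Faulhaber's formula writes `M⁻¹ Σ_{m<M} mⁿ` as a polynomial in `M` with constant term `Bₙ`.
Taking `M = pᴺ`, which tends to `0` in `ℚ_p`, the full normalized sums tend to `Bₙ`. Among
`m < pᴺ⁺¹` the multiples `m = p k` contribute `pⁿ` times the full sum at level `N`, and after
normalization this becomes `p^(n-1)` times the level-`N` average; hence the limit
`(1 - p^(n-1)) Bₙ` over the units.
-/

open Filter Finset Topology

theorem sum_range_mul_filter_dvd {M : Type*} [AddCommMonoid M] (f : ℕ → M) {a : ℕ} (ha : 0 < a)
    (b : ℕ) : ∑ m ∈ range (a * b) with a ∣ m, f m = ∑ k ∈ range b, f (a * k) := by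
  have : {m ∈ range (a * b) | a ∣ m} = (range b).map ⟨(a * ·), mul_right_injective₀ ha.ne'⟩ := by
    ext m
    simp only [mem_filter, mem_range, Finset.mem_map, Function.Embedding.coeFn_mk]
    constructor
    · rintro ⟨hm, k, rfl⟩
      exact ⟨k, Nat.lt_of_mul_lt_mul_left hm, rfl⟩
    · rintro ⟨k, hk, rfl⟩
      exact ⟨Nat.mul_lt_mul_of_pos_left hk ha, dvd_mul_right a k⟩
  rw [this, sum_map]
  rfl

/-- For `M = p` this is the `N`-th Riemann sum of the Volkenborn integral `∫_{ℤ_p} xⁿ dx`. -/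
noncomputable def volkenbornSum (K : Type*) [DivisionRing K] (M n N : ℕ) : K :=
  ((M : K) ^ N)⁻¹ * ∑ m ∈ range (M ^ N), (m : K) ^ n

variable {K : Type*}

theorem inv_mul_sum_range_pow [Field K] [CharZero K] {M : ℕ} (hM : M ≠ 0) (n : ℕ) :
    (M : K)⁻¹ * ∑ m ∈ range M, (m : K) ^ n =
      ∑ i ∈ range (n + 1),
        ((bernoulli i * (n + 1).choose i / (n + 1) : ℚ) : K) * (M : K) ^ (n - i) := by
  have hsum : ∑ m ∈ range M, (m : K) ^ n = ((∑ m ∈ range M, (m : ℚ) ^ n : ℚ) : K) := by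
    push_cast; rfl
  rw [hsum, sum_range_pow]
  push_cast
  rw [mul_sum]
  refine sum_congr rfl fun i hi => ?_
  rw [show n + 1 - i = n - i + 1 by have := mem_range.mp hi; omega, pow_succ]
  have : (M : K) ≠ 0 := Nat.cast_ne_zero.mpr hM
  field_simp

theorem tendsto_volkenbornSum [NormedField K] [CharZero K] {M : ℕ} (hM : M ≠ 0)
    (hM1 : ‖(M : K)‖ < 1) (n : ℕ) :
    Tendsto (volkenbornSum K M n) atTop (𝓝 (bernoulli n : K)) := by
  let c : ℕ → K := fun i => ((bernoulli i * (n + 1).choose i / (n + 1) : ℚ) : K)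
  let f : K → K := fun x => ∑ i ∈ range (n + 1), c i * x ^ (n - i)
  have hf : volkenbornSum K M n = f ∘ fun N => (M : K) ^ N := by
    funext N
    simp only [volkenbornSum, Function.comp_apply, f, c]
    rw [← Nat.cast_pow, inv_mul_sum_range_pow (pow_ne_zero N hM), Nat.cast_pow]
  have hf0 : f 0 = bernoulli n := by
    simp only [f]
    rw [sum_eq_single_of_mem n (self_mem_range_succ n) fun i hi _ => ?_]
    · simp only [c, Nat.sub_self, pow_zero, mul_one, Nat.choose_succ_self_right,
        Nat.cast_add_one]
      rw [mul_div_cancel_right₀ _ (Nat.cast_add_one_ne_zero n)]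
    · rw [zero_pow (by have := mem_range.mp hi; omega), mul_zero]
  rw [hf, ← hf0]
  exact ((continuous_finsetSum _ fun i _ => by fun_prop).tendsto 0).comp
    (tendsto_pow_atTop_nhds_zero_of_norm_lt_one hM1)

theorem inv_pow_succ_mul_sum_filter_not_dvd [Field K] {p : ℕ} (hp : (p : K) ≠ 0) (n N : ℕ) :
    ((p : K) ^ (N + 1))⁻¹ * ∑ m ∈ range (p ^ (N + 1)) with ¬ p ∣ m, (m : K) ^ n =
      volkenbornSum K p n (N + 1) - (p : K) ^ ((n : ℤ) - 1) * volkenbornSum K p n N := by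
  have hp0 : 0 < p := Nat.pos_of_ne_zero (by rintro rfl; simp at hp)
  have hmult : ∑ m ∈ range (p ^ (N + 1)) with p ∣ m, (m : K) ^ n =
      (p : K) ^ n * ∑ k ∈ range (p ^ N), (k : K) ^ n := by
    rw [pow_succ', sum_range_mul_filter_dvd _ hp0, mul_sum]
    simp only [Nat.cast_mul, mul_pow]
  have hsplit := sum_filter_add_sum_filter_not (range (p ^ (N + 1))) (p ∣ ·) fun m => (m : K) ^ n
  rw [volkenbornSum, volkenbornSum, eq_sub_of_add_eq' hsplit, hmult,
    zpow_sub₀ hp, zpow_natCast, zpow_one, pow_succ]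
  field_simp

/-- Volkenborn-type limit over units: `(1/pᴺ) Σ_{m<pᴺ, p∤m} mⁿ → (1 − p^{n−1})·Bₙ`
in `ℚ_p`. -/
theorem stmt18 (p : ℕ) [Fact p.Prime] (n : ℕ) :
    Filter.Tendsto
      (fun N : ℕ =>
        ((p : ℚ_[p]) ^ N)⁻¹ *
          ∑ m ∈ (Finset.range (p ^ N)).filter (fun m => ¬ p ∣ m), (m : ℚ_[p]) ^ n)
      Filter.atTop
      (nhds ((1 - (p : ℚ_[p]) ^ ((n : ℤ) - 1)) * ((bernoulli n : ℚ) : ℚ_[p]))) := by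
  have hp : p ≠ 0 := (Fact.out : p.Prime).ne_zero
  have hlim := tendsto_volkenbornSum hp Padic.norm_p_lt_one n
  rw [← tendsto_add_atTop_iff_nat 1]
  simp only [inv_pow_succ_mul_sum_filter_not_dvd (Nat.cast_ne_zero.mpr hp)]
  convert ((tendsto_add_atTop_iff_nat 1).mpr hlim).sub (hlim.const_mul _) using 2
  ring
end
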